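/- The disjunctive sum of three-player Clobber positions is not determined by their individual outcome values: there exist positions G, H, K each with value 1 (win for player 1 moving first) such that the disjoint union G + H has value [2,3] (loss for player 1 moving first) while H + K has value 1 (win for player 1 moving first). -/
import Mathlib


/-- Values of three-player (more generally `N`-player) games: a leaf is an
unconditional win for the corresponding player, an internal node is the list of
values the player to move may choose from. -/
inductive GV : Type
  | leaf : ℕ → GV
  | node : List GV → GV
  deriving Repr

namespace GV

mutual
/-- Boolean equality on game values. -/
def beq : GV → GV → Bool
  | leaf a, leaf b => a == b
  | node l, node m => beqList l m
  | _, _ => false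
def beqList : List GV → List GV → Bool
  | [], [] => true
  | x :: xs, y :: ys => beq x y && beqList xs ys
  | _, _ => false
end

instance : BEq GV := ⟨beq⟩

/-- `x` is a guaranteed win for player `p`: every leaf of the tree is `p`. -/
inductive IsWin (p : ℕ) : GV → Prop
  | leaf : IsWin p (leaf p)
  | node {l : List GV} : (∀ x ∈ l, IsWin p x) → IsWin p (node l)

/-- `x` is a guaranteed loss for player `p`: no leaf of the tree is `p`. -/
inductive IsLoss (p : ℕ) : GV → Prop
  | leaf {a : ℕ} : a ≠ p → IsLoss p (leaf a)
  | node {l : List GV} : (∀ x ∈ l, IsLoss p x) → IsLoss p (node l)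

/-- The selfish relation `X ≤ₚ Y` ("X is weaker than or equal to Y from the
perspective of player p"): `X = Y`, or a value that is neither a guaranteed win
nor loss is below the guaranteed win `p`, or a guaranteed loss is below any
non-decided value, or the relation is inferred recursively from children. -/
inductive le (p : ℕ) : GV → GV → Prop
  | refl (x) : le p x x
  | winTop {x} : ¬ IsWin p x → ¬ IsLoss p x → le p x (leaf p)
  | lossBot {x y} : IsLoss p x → ¬ IsLoss p y → le p x y
  | left {xs : List GV} {y} : (∀ x ∈ xs, le p x y) → le p (node xs) y
  | pair {xs ys : List GV} : (∀ x ∈ xs, ∀ y ∈ ys, le p x y) → le p (node xs) (node ys)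

/-- Equality of values from player `p`'s perspective: mutual weakness. -/
def eqv (p : ℕ) (x y : GV) : Prop := le p x y ∧ le p y x

/-- `X <ₚ Y`: strictly weaker from player `p`'s perspective. -/
def lt (p : ℕ) (x y : GV) : Prop := le p x y ∧ ¬ eqv p x y

/-- Fuel-indexed version of the prudent relation `<ᴾₚ`. -/
def pLtF (p : ℕ) : ℕ → GV → GV → Prop
  | 0, x, y => lt p x y
  | n+1, node xs, node ys =>
      lt p (node xs) (node ys) ∨
      ((∀ a ∈ xs, ∀ b ∈ ys, pLtF p n a b ∨ (¬ pLtF p n a b ∧ ¬ pLtF p n b a)) ∧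
        ∃ a ∈ xs, ∃ b ∈ ys, pLtF p n a b)
  | _+1, x, y => lt p x y

/-- The prudent relation `X <ᴾₚ Y`: `X <ₚ Y`, or every pair of children is
prudently weaker or prudently incomparable, with at least one strictly
prudently weaker pair.  (The fuel `sizeOf x + sizeOf y` is large enough for
the recursion to have stabilised.) -/
def pLt (p : ℕ) (x y : GV) : Prop := pLtF p (sizeOf x + sizeOf y) x y

/-- Prudent incomparability `X ≄ᴾₚ Y`. -/
def pIncomp (p : ℕ) (x y : GV) : Prop := ¬ pLt p x y ∧ ¬ pLt p y x

/-- The simple value `a_i`:  `a_0 = a` and `a_{i+1} = [b_i, c_i]` with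
`{b,c} = {1,2,3} \ {a}`. -/
def simple : ℕ → ℕ → GV
  | a, 0 => leaf a
  | a, i+1 =>
    if a = 1 then node [simple 2 i, simple 3 i]
    else if a = 2 then node [simple 1 i, simple 3 i]
    else node [simple 1 i, simple 2 i]

/-- The player moving after player `p` in a three-player game. -/
def nextP (p : ℕ) : ℕ := p % 3 + 1

/-- The two players other than `p` in a three-player game. -/
def others (p : ℕ) : ℕ × ℕ :=
  if p = 1 then (2, 3) else if p = 2 then (1, 3) else (1, 2)

/-- Prudent reduction of a list of options by player `p`: options strictly
prudently weaker than another option are discarded, duplicates are merged,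
the incomparable pair `{b_i, c_i}` is exactly `p_{i+1}` and `p_{i+1}` absorbs
`b_i` and `c_i`, and a single remaining simple option is the value itself. -/
inductive pReduce (p : ℕ) : GV → GV → Prop
  | refl (x) : pReduce p x x
  | perm {l l' : List GV} {v} : l.Perm l' → pReduce p (node l') v → pReduce p (node l) v
  | dedup {x : GV} {t : List GV} {v} :
      pReduce p (node (x :: t)) v → pReduce p (node (x :: x :: t)) v
  | drop {x y : GV} {t : List GV} {v} : y ∈ t → pLt p x y →
      pReduce p (node t) v → pReduce p (node (x :: t)) v
  | singleton (a i : ℕ) : pReduce p (node [simple a i]) (simple a i)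
  | merge {i : ℕ} {t : List GV} {v} :
      pReduce p (node (simple p (i+1) :: t)) v →
      pReduce p (node (simple (others p).1 i :: simple (others p).2 i :: t)) v
  | absorb {i b : ℕ} {t : List GV} {v} :
      (b = (others p).1 ∨ b = (others p).2) →
      pReduce p (node (simple p (i+1) :: t)) v →
      pReduce p (node (simple p (i+1) :: simple b i :: t)) v

/-- Selfish reduction of a list of options by player `p`: options strictly
weaker (in the selfish sense `<ₚ`) than another option are discarded,
duplicates are merged, and a single remaining option is the value itself. -/
inductive sReduce (p : ℕ) : GV → GV → Prop
  | refl (x) : sReduce p x x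
  | perm {l l' : List GV} {v} : l.Perm l' → sReduce p (node l') v → sReduce p (node l) v
  | dedup {x : GV} {t : List GV} {v} :
      sReduce p (node (x :: t)) v → sReduce p (node (x :: x :: t)) v
  | drop {x y : GV} {t : List GV} {v} : y ∈ t → lt p x y →
      sReduce p (node t) v → sReduce p (node (x :: t)) v
  | singleton (a i : ℕ) : sReduce p (node [simple a i]) (simple a i)

/-- Bottom-up prudent evaluation of a game tree, `p` being the player to move
at the root: children are reduced from the next player's perspective, then
the list of options is prudently reduced by `p`. -/
inductive gameReduce : ℕ → GV → GV → Prop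
  | leaf (p a) : gameReduce p (leaf a) (leaf a)
  | node {p : ℕ} {l l' : List GV} {v} :
      l.length = l'.length →
      (∀ q ∈ l.zip l', gameReduce (nextP p) q.1 q.2) →
      pReduce p (node l') v → gameReduce p (node l) v

/-- A well-formed three-player game value: leaves in `{1,2,3}`, nonempty nodes. -/
inductive Valid : GV → Prop
  | leaf {a} : (a = 1 ∨ a = 2 ∨ a = 3) → Valid (leaf a)
  | node {l} : l ≠ [] → (∀ x ∈ l, Valid x) → Valid (node l)

/-- The game tree of `x` has depth (number of moves) at most `d`. -/
inductive DepthLe : GV → ℕ → Prop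
  | leaf (a d) : DepthLe (leaf a) d
  | node {l : List GV} {d} : (∀ x ∈ l, DepthLe x d) → DepthLe (node l) (d + 1)

/-- The indifferent-selfish relation `≤₁` for player 1, with the extra axiom
`2 =₁ 3`: player 1 does not distinguish which opponent wins. -/
inductive leI : GV → GV → Prop
  | refl (x) : leI x x
  | indiff23 : leI (leaf 2) (leaf 3)
  | indiff32 : leI (leaf 3) (leaf 2)
  | winTop {x} : ¬ IsWin 1 x → ¬ IsLoss 1 x → leI x (leaf 1)
  | lossBot {x y} : IsLoss 1 x → ¬ IsLoss 1 y → leI x y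
  | left {xs : List GV} {y} : (∀ x ∈ xs, leI x y) → leI (node xs) y
  | pair {xs ys : List GV} : (∀ x ∈ xs, ∀ y ∈ ys, leI x y) → leI (node xs) (node ys)

def eqI (x y : GV) : Prop := leI x y ∧ leI y x
def ltI (x y : GV) : Prop := leI x y ∧ ¬ eqI x y

/-- `n` nested singleton wraps around `x`. -/
def wrap : ℕ → GV → GV
  | 0, x => x
  | n+1, x => node [wrap n x]

/-! ### Three-player Clobber on a `1 × n` board.
A board is a list over `{0,1,2,3}`: `0` is an empty vertex, `i ≥ 1` a token of
player `i`.  A move clobbers an adjacent token of another player. -/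

/-- All boards resulting from a move of player `q` on board `b`. -/
def movesOf (b : List ℕ) (q : ℕ) : List (List ℕ) :=
  (List.range b.length).flatMap fun i =>
    (([i+1, i-1]).filter fun j =>
        decide (j < b.length) && decide (j ≠ i) && (b.getD i 0 == q) &&
        (b.getD j 0 != 0) && (b.getD j 0 != q)).map
      fun j => (b.set j q).set i 0

def canMove (b : List ℕ) (q : ℕ) : Bool := !(movesOf b q).isEmpty

/-- The first player, starting cyclically from `p`, who has a legal move
(players unable to move skip their turn). -/
def firstMover (b : List ℕ) (p : ℕ) : Option ℕ :=
  if canMove b p then some p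
  else if canMove b (nextP p) then some (nextP p)
  else if canMove b (nextP (nextP p)) then some (nextP (nextP p))
  else none

/-- A node all of whose (distinct) children are the single leaf `a` has value `a`. -/
def mkNode : List GV → GV
  | [leaf a] => leaf a
  | l => node l

/-- Bottom-up value of a Clobber position: `last` is the last player who moved;
if nobody can move the value is the leaf `last`, otherwise it is the list of
the distinct values of the moves of the next player able to move. -/
def clobberVal : ℕ → List ℕ → ℕ → ℕ → GV
  | 0, _, _, last => leaf last
  | fuel+1, b, p, last =>
    match firstMover b p with
    | none => leaf last
    | some q => mkNode (((movesOf b q).map fun b' => clobberVal fuel b' (nextP q) q).eraseDups)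

/-- The value of a Clobber board, player 1 moving first. -/
def clobber (b : List ℕ) : GV := clobberVal (b.length + 1) b 1 0

/-- Number of tokens on a board. -/
def tokens (b : List ℕ) : ℕ := (b.filter fun t => t ≠ 0).length

end GV

open GV in
lemma not_le_1_3 : ¬ GV.le 1 (GV.leaf 1) (GV.leaf 3) := by
  intro h
  cases h with
  | lossBot h1 h2 => cases h1 with | leaf h => exact h rfl

open GV in
lemma lt_3_1 : GV.lt 1 (GV.leaf 3) (GV.leaf 1) := by
  refine ⟨GV.le.lossBot (GV.IsLoss.leaf (by decide)) ?_, fun h => not_le_1_3 h.2⟩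
  intro h; cases h with | leaf h => exact h rfl

/-- the disjunctive sum of three-player Clobber positions is not
determined by their outcome values: `G = (1 2)`, `H = (1 3)`, `K = (1 1 2)`
all have (selfish) value `1`, yet `G + H = (1 2 0 1 3)` has value `[2,3]`
while `K + H = (1 1 2 0 1 3)` has value `1` (player 1 moving first). -/
theorem clobber_sum_not_determined_by_values :
    GV.sReduce 1 (GV.clobber [1, 2]) (GV.leaf 1) ∧
    GV.sReduce 1 (GV.clobber [1, 3]) (GV.leaf 1) ∧
    GV.sReduce 1 (GV.clobber [1, 1, 2]) (GV.leaf 1) ∧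
    (∃ l : List GV, GV.sReduce 1 (GV.clobber [1, 2, 0, 1, 3]) (GV.node l) ∧
      l.Perm [GV.leaf 2, GV.leaf 3]) ∧
    GV.sReduce 1 (GV.clobber [1, 1, 2, 0, 1, 3]) (GV.leaf 1) := by
  refine ⟨?_, ?_, ?_, ⟨[GV.leaf 3, GV.leaf 2], ?_, ?_⟩, ?_⟩
  · exact GV.sReduce.refl _
  · exact GV.sReduce.refl _
  · exact GV.sReduce.refl _
  · exact GV.sReduce.refl _
  · exact List.Perm.swap _ _ _
  · show GV.sReduce 1 (GV.node [GV.leaf 3, GV.leaf 1]) (GV.leaf 1)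
    exact GV.sReduce.drop (List.mem_singleton.mpr rfl) lt_3_1 (GV.sReduce.singleton 1 0)
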